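/- arXiv:2406.07324 — 2 statements merged into one kernel-verified Lean document; each statement's English description precedes it below -/
import Mathlib

section
/- If the discrete-time linear system x_{k+1} = A x_k, y_k = C x_k is asymptotically stable and there exists a symmetric positive definite n×n real matrix Q satisfying AᵀQA − Q + CᵀC = 0, then the system is observable: for every nonzero x₀ ∈ ℝⁿ there exists a natural number k with C Aᵏ x₀ ≠ 0. -/
/-!
If `C Aᵏ x₀ = 0` for all `k`, the Lyapunov equation makes `V x := xᵀ Q x` constant along the
trajectory `Aᵏ x₀`. Stability sends the trajectory to `0`, so by continuity `V x₀ = V 0 = 0`,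
and positive definiteness of `Q` forces `x₀ = 0`.
-/

open Filter Matrix

section Lyapunov

variable {ι κ R : Type*} [Fintype ι] [Fintype κ] [CommRing R]

theorem Matrix.dotProduct_mulVec_mulVec_of_lyapunov {A Q : Matrix ι ι R} {C : Matrix κ ι R}
    (hlyap : Aᵀ * Q * A - Q + Cᵀ * C = 0) (v : ι → R) :
    A *ᵥ v ⬝ᵥ Q *ᵥ (A *ᵥ v) = v ⬝ᵥ Q *ᵥ v - C *ᵥ v ⬝ᵥ C *ᵥ v := by
  have hAQA : Aᵀ * Q * A = Q - Cᵀ * C := by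
    rw [← sub_eq_zero, ← hlyap]
    abel
  calc A *ᵥ v ⬝ᵥ Q *ᵥ (A *ᵥ v) = v ⬝ᵥ (Aᵀ * Q * A) *ᵥ v := by
        simp only [dotProduct_mulVec, vecMul_mulVec, vecMul_vecMul, Matrix.mul_assoc]
    _ = v ⬝ᵥ Q *ᵥ v - v ⬝ᵥ (Cᵀ * C) *ᵥ v := by
        rw [hAQA, sub_mulVec, dotProduct_sub]
    _ = v ⬝ᵥ Q *ᵥ v - C *ᵥ v ⬝ᵥ C *ᵥ v := by
        simp only [dotProduct_mulVec, vecMul_mulVec]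

theorem Matrix.dotProduct_mulVec_pow_mulVec_of_lyapunov {A Q : Matrix ι ι R} {C : Matrix κ ι R}
    [DecidableEq ι] (hlyap : Aᵀ * Q * A - Q + Cᵀ * C = 0) {x₀ : ι → R}
    (hunobs : ∀ k : ℕ, C *ᵥ (A ^ k *ᵥ x₀) = 0) (k : ℕ) :
    A ^ k *ᵥ x₀ ⬝ᵥ Q *ᵥ (A ^ k *ᵥ x₀) = x₀ ⬝ᵥ Q *ᵥ x₀ := by
  induction k with
  | zero => simp
  | succ k ih =>
    rw [pow_succ', ← mulVec_mulVec, dotProduct_mulVec_mulVec_of_lyapunov hlyap, hunobs k,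
      dotProduct_zero, sub_zero, ih]

end Lyapunov

/-- If the system `x_{k+1} = A x_k`, `y_k = C x_k` is asymptotically stable and there
is a symmetric positive definite solution of `AᵀQA − Q + CᵀC = 0`, then the system is
observable. -/
theorem stmt_3 {n p : ℕ} (A : Matrix (Fin n) (Fin n) ℝ) (C : Matrix (Fin p) (Fin n) ℝ)
    (hstab : ∀ x₀ : Fin n → ℝ,
      Tendsto (fun k : ℕ => (A ^ k) *ᵥ x₀) atTop (nhds 0))
    (hQ : ∃ Q : Matrix (Fin n) (Fin n) ℝ, Q.PosDef ∧ Aᵀ * Q * A - Q + Cᵀ * C = 0) :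
    ∀ x₀ : Fin n → ℝ, x₀ ≠ 0 → ∃ k : ℕ, C *ᵥ ((A ^ k) *ᵥ x₀) ≠ 0 := by
  obtain ⟨Q, hQpd, hlyap⟩ := hQ
  intro x₀ hx₀
  by_contra! hunobs
  have hV : Continuous fun v : Fin n → ℝ => v ⬝ᵥ Q *ᵥ v :=
    continuous_id.dotProduct (continuous_const.matrix_mulVec continuous_id)
  have hV₀ : x₀ ⬝ᵥ Q *ᵥ x₀ = 0 := by
    have hlim := (hV.tendsto 0).comp (hstab x₀)
    simp only [Function.comp_def, dotProduct_mulVec_pow_mulVec_of_lyapunov hlyap hunobs,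
      zero_dotProduct, tendsto_const_nhds_iff] at hlim
    exact hlim
  exact (hQpd.dotProduct_mulVec_pos hx₀).ne' hV₀
end

section
/- If the discrete-time linear system x_{k+1} = A x_k, y_k = C x_k is asymptotically stable, then there exists a symmetric positive semidefinite n×n real matrix Q satisfying AᵀQA − Q + CᵀC = 0; consequently (combining with detectability), the system is asymptotically stable if and only if it is detectable and there exists a symmetric positive semidefinite solution Q of AᵀQA − Q + CᵀC = 0. -/
/-!
Asymptotic stability of `A` is equivalent to the spectrum of its complexification lying in the
open unit disc. If `A v = μ v`, the real and imaginary parts of the trajectory `μ ^ k • v` are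
real trajectories, so stability forces `‖μ‖ < 1`; conversely, by Gelfand's formula `‖A ^ k‖`
then decays geometrically.

Geometric decay makes `Q = ∑ₖ (C Aᵏ)ᵀ (C Aᵏ)` converge, and shifting the index gives the
Lyapunov equation. Conversely, let `Q ⪰ 0` solve the Lyapunov equation and `A v = μ v` with
`‖μ‖ ≥ 1`. Testing the equation against `v` gives `(‖μ‖² - 1) v*Qv + ‖Cv‖² = 0`, hence `Cv = 0`.
The real and imaginary parts of `v` then have zero output, so by detectability their trajectories
tend to `0`, which forces `‖μ‖ < 1` after all.
-/

open Filter Matrix Topology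
open scoped ComplexOrder

theorem exists_lt_one_eventually_norm_pow_le {𝔸 : Type*} [NormedRing 𝔸] [NormedAlgebra ℂ 𝔸]
    [CompleteSpace 𝔸] {a : 𝔸} (h : ∀ μ ∈ spectrum ℂ a, ‖μ‖ < 1) :
    ∃ r : ℝ, 0 ≤ r ∧ r < 1 ∧ ∀ᶠ k in atTop, ‖a ^ k‖ ≤ r ^ k := by
  have hρ : spectralRadius ℂ a < 1 := by
    rcases (spectrum ℂ a).eq_empty_or_nonempty with hempty | hne
    · simp [spectralRadius, hempty]
    · exact_mod_cast spectrum.spectralRadius_lt_of_forall_lt_of_nonempty hne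
        fun μ hμ => by exact_mod_cast h μ hμ
  obtain ⟨r, hρr, hr1⟩ := ENNReal.lt_iff_exists_nnreal_btwn.1 hρ
  refine ⟨r, r.2, by exact_mod_cast hr1, ?_⟩
  filter_upwards [(spectrum.pow_norm_pow_one_div_tendsto_nhds_spectralRadius a).eventually_lt_const
    hρr, eventually_ne_atTop 0] with k hk hk0
  rw [ENNReal.ofReal_lt_iff_lt_toReal (by positivity) ENNReal.coe_ne_top, ENNReal.coe_toReal,
    one_div] at hk
  calc ‖a ^ k‖ = (‖a ^ k‖ ^ (k⁻¹ : ℝ)) ^ k := (Real.rpow_inv_natCast_pow (norm_nonneg _) hk0).symm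
    _ ≤ r ^ k := by gcongr

theorem norm_lt_one_of_tendsto_pow_smul {𝕜 E : Type*} [NormedField 𝕜] [NormedAddCommGroup E]
    [NormedSpace 𝕜 E] {μ : 𝕜} {v : E} (hv : v ≠ 0)
    (h : Tendsto (fun k : ℕ => μ ^ k • v) atTop (𝓝 0)) : ‖μ‖ < 1 := by
  have hnorm : Tendsto (fun k : ℕ => ‖μ‖ ^ k * ‖v‖) atTop (𝓝 0) := by
    simpa [norm_smul] using h.norm
  have hpow : Tendsto (fun k : ℕ => ‖μ‖ ^ k) atTop (𝓝 0) := by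
    simpa [hv] using hnorm.mul_const ‖v‖⁻¹
  simpa using tendsto_pow_atTop_nhds_zero_iff.1 hpow

namespace Matrix

variable {ι κ : Type*} [Fintype ι]

theorem re_map_ofReal_mulVec (M : Matrix κ ι ℝ) (w : ι → ℂ) :
    Complex.re ∘ (M.map Complex.ofReal *ᵥ w) = M *ᵥ (Complex.re ∘ w) := by
  ext i
  simp [mulVec, dotProduct, Complex.re_sum]

theorem im_map_ofReal_mulVec (M : Matrix κ ι ℝ) (w : ι → ℂ) :
    Complex.im ∘ (M.map Complex.ofReal *ᵥ w) = M *ᵥ (Complex.im ∘ w) := by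
  ext i
  simp [mulVec, dotProduct, Complex.im_sum]

omit [Fintype ι] in
theorem conjTranspose_map_ofReal (M : Matrix κ ι ℝ) :
    (M.map Complex.ofReal)ᴴ = Mᵀ.map Complex.ofReal := by
  ext
  simp

theorem PosSemidef.map_ofReal {Q : Matrix ι ι ℝ} (hQ : Q.PosSemidef) :
    (Q.map Complex.ofReal).PosSemidef := by
  obtain ⟨m, u, rfl⟩ := posSemidef_iff_eq_sum_vecMulVec.1 hQ
  have hmap : (∑ i, vecMulVec (u i) (star (u i))).map Complex.ofReal =
      ∑ i, vecMulVec (Complex.ofReal ∘ u i) (star (Complex.ofReal ∘ u i)) := by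
    ext a b
    simp [vecMulVec, Matrix.sum_apply]
  rw [hmap]
  exact posSemidef_sum _ fun i _ => posSemidef_vecMulVec_self_star _

theorem PosSemidef.tsum {f : ℕ → Matrix ι ι ℝ} (hf : ∀ k, (f k).PosSemidef) (hs : Summable f) :
    (∑' k, f k).PosSemidef := by
  refine .of_dotProduct_mulVec_nonneg ?_ fun x => ?_
  · rw [IsHermitian, conjTranspose_tsum]
    exact tsum_congr fun k => (hf k).isHermitian
  · have hcont : Continuous fun M : Matrix ι ι ℝ => star x ⬝ᵥ (M *ᵥ x) := by fun_prop
    exact ge_of_tendsto ((hcont.tendsto _).comp hs.hasSum.tendsto_sum_nat)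
      (Eventually.of_forall fun N => (posSemidef_sum _ fun k _ => hf k).dotProduct_mulVec_nonneg x)

theorem mulVec_eq_zero_of_lyapunov [Fintype κ] {A Q : Matrix ι ι ℂ} {C : Matrix κ ι ℂ}
    (hQ : Q.PosSemidef) (hL : Aᴴ * Q * A - Q + Cᴴ * C = 0) {μ : ℂ} {v : ι → ℂ}
    (hv : A *ᵥ v = μ • v) (hμ : 1 ≤ ‖μ‖) : C *ᵥ v = 0 := by
  have hquad :
      ((‖μ‖ ^ 2 - 1 : ℝ) : ℂ) * (star v ⬝ᵥ (Q *ᵥ v)) + star (C *ᵥ v) ⬝ᵥ (C *ᵥ v) = 0 := by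
    have h := congrArg (fun M => star v ⬝ᵥ (M *ᵥ v)) hL
    simp only [add_mulVec, sub_mulVec, ← mulVec_mulVec, dotProduct_add, dotProduct_sub,
      zero_mulVec, dotProduct_zero] at h
    rw [dotProduct_mulVec _ Aᴴ, dotProduct_mulVec _ Cᴴ, ← star_mulVec, ← star_mulVec, hv,
      star_smul, mulVec_smul, smul_dotProduct, dotProduct_smul, smul_eq_mul, smul_eq_mul,
      Complex.star_def, ← mul_assoc, Complex.conj_mul'] at h
    push_cast
    linear_combination h
  have hform : 0 ≤ ((‖μ‖ ^ 2 - 1 : ℝ) : ℂ) * (star v ⬝ᵥ (Q *ᵥ v)) :=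
    mul_nonneg (Complex.zero_le_real.2 (by nlinarith)) (hQ.dotProduct_mulVec_nonneg v)
  exact dotProduct_star_self_eq_zero.1
    ((add_eq_zero_iff_of_nonneg hform (dotProduct_star_self_nonneg _)).1 hquad).2

variable [DecidableEq ι]

theorem map_ofReal_pow (A : Matrix ι ι ℝ) (k : ℕ) :
    A.map Complex.ofReal ^ k = (A ^ k).map Complex.ofReal :=
  (Matrix.map_pow A Complex.ofRealHom k).symm

theorem exists_mulVec_eq_smul_of_mem_spectrum {K : Type*} [Field K] {M : Matrix ι ι K} {μ : K}
    (h : μ ∈ spectrum K M) : ∃ v ≠ 0, M *ᵥ v = μ • v := by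
  rw [← spectrum_toLin', ← Module.End.hasEigenvalue_iff_mem_spectrum] at h
  obtain ⟨v, hv⟩ := h.exists_hasEigenvector
  exact ⟨v, hv.2, by simpa using hv.apply_eq_smul⟩

theorem pow_mulVec_of_mulVec_eq_smul {R : Type*} [CommSemiring R] {M : Matrix ι ι R} {μ : R}
    {v : ι → R} (h : M *ᵥ v = μ • v) (k : ℕ) : (M ^ k) *ᵥ v = μ ^ k • v := by
  induction k with
  | zero => simp
  | succ k ih => rw [pow_succ', ← mulVec_mulVec, ih, mulVec_smul, h, smul_smul, ← pow_succ]

theorem tendsto_map_ofReal_pow_mulVec {A : Matrix ι ι ℝ} {w : ι → ℂ}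
    (hre : Tendsto (fun k : ℕ => (A ^ k) *ᵥ (Complex.re ∘ w)) atTop (𝓝 0))
    (him : Tendsto (fun k : ℕ => (A ^ k) *ᵥ (Complex.im ∘ w)) atTop (𝓝 0)) :
    Tendsto (fun k : ℕ => (A.map Complex.ofReal ^ k) *ᵥ w) atTop (𝓝 0) := by
  rw [tendsto_pi_nhds]
  intro i
  have hcont : Continuous fun p : ℝ × ℝ => (p.1 : ℂ) + p.2 * Complex.I := by fun_prop
  have hlim := (hcont.tendsto (0, 0)).comp
    ((tendsto_pi_nhds.1 hre i).prodMk_nhds (tendsto_pi_nhds.1 him i))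
  simp only [Complex.ofReal_zero, zero_mul, add_zero] at hlim
  refine hlim.congr fun k => ?_
  simp only [Function.comp_apply, map_ofReal_pow, ← re_map_ofReal_mulVec, ← im_map_ofReal_mulVec,
    Complex.re_add_im]

theorem norm_lt_one_of_mulVec_eq_smul {A : Matrix ι ι ℝ} {μ : ℂ} {v : ι → ℂ} (hv0 : v ≠ 0)
    (hv : A.map Complex.ofReal *ᵥ v = μ • v)
    (hre : Tendsto (fun k : ℕ => (A ^ k) *ᵥ (Complex.re ∘ v)) atTop (𝓝 0))
    (him : Tendsto (fun k : ℕ => (A ^ k) *ᵥ (Complex.im ∘ v)) atTop (𝓝 0)) : ‖μ‖ < 1 :=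
  norm_lt_one_of_tendsto_pow_smul hv0 <|
    (tendsto_map_ofReal_pow_mulVec hre him).congr (pow_mulVec_of_mulVec_eq_smul hv)

theorem norm_lt_one_of_mem_spectrum_of_tendsto {A : Matrix ι ι ℝ}
    (h : ∀ x : ι → ℝ, Tendsto (fun k : ℕ => (A ^ k) *ᵥ x) atTop (𝓝 0)) :
    ∀ μ ∈ spectrum ℂ (A.map Complex.ofReal), ‖μ‖ < 1 := by
  intro μ hμ
  obtain ⟨v, hv0, hv⟩ := exists_mulVec_eq_smul_of_mem_spectrum hμ
  exact norm_lt_one_of_mulVec_eq_smul hv0 hv (h _) (h _)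

theorem norm_lt_one_of_mem_spectrum_of_detectable [Fintype κ] {A Q : Matrix ι ι ℝ}
    {C : Matrix κ ι ℝ}
    (hdet : ∀ x : ι → ℝ, (∀ k : ℕ, C *ᵥ ((A ^ k) *ᵥ x) = 0) →
      Tendsto (fun k : ℕ => (A ^ k) *ᵥ x) atTop (𝓝 0))
    (hQ : Q.PosSemidef) (hL : Aᵀ * Q * A - Q + Cᵀ * C = 0) :
    ∀ μ ∈ spectrum ℂ (A.map Complex.ofReal), ‖μ‖ < 1 := by
  intro μ hμ
  obtain ⟨v, hv0, hv⟩ := exists_mulVec_eq_smul_of_mem_spectrum hμ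
  by_contra! hμ1
  have hLℂ : (A.map Complex.ofReal)ᴴ * Q.map Complex.ofReal * A.map Complex.ofReal -
      Q.map Complex.ofReal + (C.map Complex.ofReal)ᴴ * C.map Complex.ofReal = 0 := by
    have h := congrArg (Matrix.map · Complex.ofRealHom) hL
    simp only [conjTranspose_map_ofReal]
    rwa [Matrix.map_add _ (map_add _), Matrix.map_sub _ (map_sub _), Matrix.map_mul,
      Matrix.map_mul, Matrix.map_mul, Matrix.map_zero _ (map_zero _)] at h
  have hCv := mulVec_eq_zero_of_lyapunov hQ.map_ofReal hLℂ hv hμ1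
  have hout (k : ℕ) : C.map Complex.ofReal *ᵥ (A.map Complex.ofReal ^ k *ᵥ v) = 0 := by
    rw [pow_mulVec_of_mulVec_eq_smul hv, mulVec_smul, hCv, smul_zero]
  refine hμ1.not_gt
    (norm_lt_one_of_mulVec_eq_smul hv0 hv (hdet _ fun k => ?_) (hdet _ fun k => ?_))
  · rw [← re_map_ofReal_mulVec, ← re_map_ofReal_mulVec, ← map_ofReal_pow, hout k]
    rfl
  · rw [← im_map_ofReal_mulVec, ← im_map_ofReal_mulVec, ← map_ofReal_pow, hout k]
    rfl

section Frobenius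

attribute [local instance] frobeniusNormedAddCommGroup frobeniusNormedSpace frobeniusNormedRing
  frobeniusNormedAlgebra

theorem exists_lt_one_eventually_norm_pow_le {A : Matrix ι ι ℝ}
    (h : ∀ μ ∈ spectrum ℂ (A.map Complex.ofReal), ‖μ‖ < 1) :
    ∃ r : ℝ, 0 ≤ r ∧ r < 1 ∧ ∀ᶠ k in atTop, ‖A ^ k‖ ≤ r ^ k := by
  obtain ⟨r, hr0, hr1, hr⟩ := _root_.exists_lt_one_eventually_norm_pow_le h
  refine ⟨r, hr0, hr1, hr.mono fun k hk => ?_⟩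
  rwa [map_ofReal_pow, frobenius_norm_map_eq _ _ Complex.norm_real] at hk

theorem tendsto_pow_mulVec_of_norm_pow_le {A : Matrix ι ι ℝ} {r : ℝ} (hr0 : 0 ≤ r) (hr1 : r < 1)
    (hA : ∀ᶠ k in atTop, ‖A ^ k‖ ≤ r ^ k) (x : ι → ℝ) :
    Tendsto (fun k : ℕ => (A ^ k) *ᵥ x) atTop (𝓝 0) := by
  have hpow : Tendsto (fun k : ℕ => A ^ k) atTop (𝓝 0) :=
    squeeze_zero_norm' hA (tendsto_pow_atTop_nhds_zero_of_lt_one hr0 hr1)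
  simpa [Function.comp_def] using
    ((continuous_id.matrix_mulVec continuous_const).tendsto 0).comp hpow

theorem exists_posSemidef_lyapunov_of_norm_pow_le [Fintype κ] {A : Matrix ι ι ℝ} {r : ℝ}
    (hr0 : 0 ≤ r) (hr1 : r < 1) (hA : ∀ᶠ k in atTop, ‖A ^ k‖ ≤ r ^ k) (C : Matrix κ ι ℝ) :
    ∃ Q : Matrix ι ι ℝ, Q.PosSemidef ∧ Aᵀ * Q * A - Q + Cᵀ * C = 0 := by
  set g : ℕ → Matrix ι ι ℝ := fun k => (C * A ^ k)ᵀ * (C * A ^ k) with hg_def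
  have hg : Summable g := by
    refine Summable.of_norm_bounded_eventually_nat
      ((summable_geometric_of_lt_one (r := r ^ 2) (by positivity) (by nlinarith)).mul_left
        (‖C‖ ^ 2)) ?_
    filter_upwards [hA] with k hk
    have hCA : ‖C * A ^ k‖ ≤ ‖C‖ * r ^ k :=
      (frobenius_norm_mul _ _).trans (mul_le_mul_of_nonneg_left hk (norm_nonneg _))
    calc ‖g k‖ ≤ ‖C * A ^ k‖ * ‖C * A ^ k‖ := by
          simpa only [frobenius_norm_transpose] using frobenius_norm_mul (C * A ^ k)ᵀ (C * A ^ k)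
      _ ≤ (‖C‖ * r ^ k) * (‖C‖ * r ^ k) := mul_le_mul hCA hCA (norm_nonneg _) (by positivity)
      _ = ‖C‖ ^ 2 * (r ^ 2) ^ k := by ring
  have hshift : Aᵀ * (∑' k, g k) * A = ∑' k, g (k + 1) := by
    rw [← hg.tsum_mul_left, ← (hg.mul_left _).tsum_mul_right]
    exact tsum_congr fun k => by simp only [hg_def, pow_succ, transpose_mul, Matrix.mul_assoc]
  refine ⟨∑' k, g k, PosSemidef.tsum (fun k => ?_) hg, ?_⟩
  · simpa only [conjTranspose_eq_transpose_of_trivial] using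
      posSemidef_conjTranspose_mul_self (C * A ^ k)
  · rw [hshift, hg.tsum_eq_zero_add]
    simp [hg_def]

theorem forall_tendsto_pow_mulVec_iff (A : Matrix ι ι ℝ) :
    (∀ x : ι → ℝ, Tendsto (fun k : ℕ => (A ^ k) *ᵥ x) atTop (𝓝 0)) ↔
      ∀ μ ∈ spectrum ℂ (A.map Complex.ofReal), ‖μ‖ < 1 := by
  refine ⟨norm_lt_one_of_mem_spectrum_of_tendsto, fun h x => ?_⟩
  obtain ⟨r, hr0, hr1, hA⟩ := exists_lt_one_eventually_norm_pow_le h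
  exact tendsto_pow_mulVec_of_norm_pow_le hr0 hr1 hA x

theorem exists_posSemidef_lyapunov [Fintype κ] {A : Matrix ι ι ℝ}
    (h : ∀ μ ∈ spectrum ℂ (A.map Complex.ofReal), ‖μ‖ < 1) (C : Matrix κ ι ℝ) :
    ∃ Q : Matrix ι ι ℝ, Q.PosSemidef ∧ Aᵀ * Q * A - Q + Cᵀ * C = 0 := by
  obtain ⟨r, hr0, hr1, hA⟩ := exists_lt_one_eventually_norm_pow_le h
  exact exists_posSemidef_lyapunov_of_norm_pow_le hr0 hr1 hA C

end Frobenius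

end Matrix

/-- If the system `x_{k+1} = A x_k`, `y_k = C x_k` is asymptotically stable, then
there exists a symmetric positive semidefinite solution `Q` of `AᵀQA − Q + CᵀC = 0`;
consequently, the system is asymptotically stable if and only if it is detectable and
such a solution exists. -/
theorem stmt_8 {n p : ℕ} (A : Matrix (Fin n) (Fin n) ℝ) (C : Matrix (Fin p) (Fin n) ℝ) :
    ((∀ x₀ : Fin n → ℝ, Tendsto (fun k : ℕ => (A ^ k) *ᵥ x₀) atTop (nhds 0)) →
      ∃ Q : Matrix (Fin n) (Fin n) ℝ, Q.PosSemidef ∧ Aᵀ * Q * A - Q + Cᵀ * C = 0) ∧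
    ((∀ x₀ : Fin n → ℝ, Tendsto (fun k : ℕ => (A ^ k) *ᵥ x₀) atTop (nhds 0)) ↔
      ((∀ x₀ : Fin n → ℝ, (∀ k : ℕ, C *ᵥ ((A ^ k) *ᵥ x₀) = 0) →
          Tendsto (fun k : ℕ => (A ^ k) *ᵥ x₀) atTop (nhds 0)) ∧
        ∃ Q : Matrix (Fin n) (Fin n) ℝ, Q.PosSemidef ∧ Aᵀ * Q * A - Q + Cᵀ * C = 0)) := by
  have lyapunov_of_stable
      (h : ∀ x₀ : Fin n → ℝ, Tendsto (fun k : ℕ => (A ^ k) *ᵥ x₀) atTop (nhds 0)) :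
      ∃ Q : Matrix (Fin n) (Fin n) ℝ, Q.PosSemidef ∧ Aᵀ * Q * A - Q + Cᵀ * C = 0 :=
    exists_posSemidef_lyapunov ((forall_tendsto_pow_mulVec_iff A).1 h) C
  refine ⟨lyapunov_of_stable, fun h => ⟨fun x₀ _ => h x₀, lyapunov_of_stable h⟩, ?_⟩
  rintro ⟨hdet, Q, hQ, hL⟩
  exact (forall_tendsto_pow_mulVec_iff A).2 (norm_lt_one_of_mem_spectrum_of_detectable hdet hQ hL)
end
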